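/- Let G₁ ⊔ G₂ be a partition of the internal gates of a monotone cycluit C, and define the frontier F as the set of gates in one part that are inputs to a gate of the other part. Then the sequence U_1 ⊆ U_2 ⊆ ... of frontier subsets arising in the partition-based evaluation algorithm (where U_i is the set of frontier gates evaluated to true after i rounds of alternately saturating each part) is monotone increasing and stabilizes after at most |F| + 1 rounds; consequently, the partition-based evaluation using |F| + 2 rounds computes exactly the set of gates true under the standard least-fixpoint evaluation of C. -/

import Mathlib

/-!
The sets `T i` of true gates after `i` rounds increase, and a round only reads its argument
through the true frontier gates. The traces `T i ∩ F` form an increasing chain of subsets of `F`,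
so two consecutive ones agree within `|F|` rounds, and from then on `T` is a fixed point of a
round. Every round is sound for the least-fixpoint evaluation. Conversely, each true internal gate
is derived by the saturation of its own part, so at a fixed point the inputs of a gate of part `b`
are available to the saturation of part `b` (as constants, as gates of part `b`, or as frontier
gates); hence the fixed point is closed under the global OR/AND rules and contains `Eval`.
-/

inductive GateTy | inp | and | or
deriving DecidableEq

/-- Least set containing `Z` and closed under the OR/AND rules, restricted to gates in `Dom`. -/
def SubEval {G : Type*} (W : G → G → Prop) (μ : G → GateTy) (Z Dom : Set G) : Set G :=
  ⋂₀ {S | Z ⊆ S ∧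
      (∀ g ∈ Dom, μ g = GateTy.or → (∃ u, W u g ∧ u ∈ S) → g ∈ S) ∧
      (∀ g ∈ Dom, μ g = GateTy.and → (∀ u, W u g → u ∈ S) → g ∈ S)}

/-- Gates that are true initially: true inputs and constant AND-gates. -/
def CST {G : Type*} (W : G → G → Prop) (μ : G → GateTy) (ν : G → Bool) : Set G :=
  {g | μ g = GateTy.inp ∧ ν g = true} ∪ {g | μ g = GateTy.and ∧ ∀ u, ¬ W u g}

/-- The standard least-fixpoint evaluation of a monotone cycluit. -/
def Eval {G : Type*} (W : G → G → Prop) (μ : G → GateTy) (ν : G → Bool) : Set G :=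
  SubEval W μ (CST W μ ν) {g | μ g ≠ GateTy.inp}

/-- The internal gates assigned to side `b` by the evaluation partition `side`. -/
def PartSide {G : Type*} (μ : G → GateTy) (side : G → Bool) (b : Bool) : Set G :=
  {g | μ g ≠ GateTy.inp ∧ side g = b}

/-- The frontier gates feeding into side `b`: gates of the other part that are inputs
to some gate of part `b`. -/
def Frontier {G : Type*} (W : G → G → Prop) (μ : G → GateTy) (side : G → Bool)
    (b : Bool) : Set G :=
  {g ∈ PartSide μ side (!b) | ∃ g', g' ∈ PartSide μ side b ∧ W g g'}

/-- One round of the partition-based evaluation: saturate each part separately from the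
constants and the currently-true frontier gates. -/
def RoundStep {G : Type*} (W : G → G → Prop) (μ : G → GateTy) (ν : G → Bool)
    (side : G → Bool) (S : Set G) : Set G :=
  SubEval W μ (CST W μ ν ∪ (S ∩ Frontier W μ side true)) (PartSide μ side true) ∪
  SubEval W μ (CST W μ ν ∪ (S ∩ Frontier W μ side false)) (PartSide μ side false) ∪
  CST W μ ν

theorem exists_le_ncard_eq_succ_of_monotone {α : Type*} {s : ℕ → Set α} {F : Set α}
    (hF : F.Finite) (hs : Monotone s) (hsF : ∀ i, s i ⊆ F) :
    ∃ i ≤ F.ncard, s i = s (i + 1) := by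
  by_contra! hne
  have hgrow : ∀ i ≤ F.ncard + 1, i ≤ (s i).ncard := by
    intro i
    induction i with
    | zero => simp
    | succ i ih =>
      intro hi
      have hlt : (s i).ncard < (s (i + 1)).ncard :=
        Set.ncard_lt_ncard ((hs i.le_succ).ssubset_of_ne (hne i (by omega)))
          (hF.subset (hsF _))
      have := ih (by omega)
      omega
  have hle := Set.ncard_le_ncard (hsF (F.ncard + 1)) hF
  have := hgrow _ le_rfl
  omega

section SubEval

variable {G : Type*} {W : G → G → Prop} {μ : G → GateTy}

def GateClosed (W : G → G → Prop) (μ : G → GateTy) (Dom S : Set G) : Prop :=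
  (∀ g ∈ Dom, μ g = GateTy.or → (∃ u, W u g ∧ u ∈ S) → g ∈ S) ∧
  (∀ g ∈ Dom, μ g = GateTy.and → (∀ u, W u g → u ∈ S) → g ∈ S)

theorem GateClosed.anti {Dom Dom' S : Set G} (h : GateClosed W μ Dom S) (hD : Dom' ⊆ Dom) :
    GateClosed W μ Dom' S :=
  ⟨fun g hg => h.1 g (hD hg), fun g hg => h.2 g (hD hg)⟩

theorem subEval_subset {Z Dom S : Set G} (hZ : Z ⊆ S) (hS : GateClosed W μ Dom S) :
    SubEval W μ Z Dom ⊆ S :=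
  Set.sInter_subset_of_mem ⟨hZ, hS⟩

theorem subset_subEval {Z Dom : Set G} : Z ⊆ SubEval W μ Z Dom :=
  fun _ hx => Set.mem_sInter.2 fun _ hS => hS.1 hx

theorem gateClosed_subEval {Z Dom : Set G} : GateClosed W μ Dom (SubEval W μ Z Dom) := by
  refine ⟨?_, ?_⟩
  · rintro g hg hor ⟨u, hWu, hu⟩
    exact Set.mem_sInter.2 fun S hS => hS.2.1 g hg hor ⟨u, hWu, Set.mem_sInter.1 hu S hS⟩
  · intro g hg hand hin
    exact Set.mem_sInter.2 fun S hS =>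
      hS.2.2 g hg hand fun u hWu => Set.mem_sInter.1 (hin u hWu) S hS

theorem subEval_mono {Z Z' Dom Dom' : Set G} (hZ : Z ⊆ Z') (hD : Dom ⊆ Dom') :
    SubEval W μ Z Dom ⊆ SubEval W μ Z' Dom' :=
  subEval_subset (hZ.trans subset_subEval) (gateClosed_subEval.anti hD)

theorem subEval_subset_union {Z Dom : Set G} : SubEval W μ Z Dom ⊆ Z ∪ Dom :=
  subEval_subset Set.subset_union_left ⟨fun _ hg _ _ => Or.inr hg, fun _ hg _ _ => Or.inr hg⟩

end SubEval

section Rounds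

variable {G : Type*} (W : G → G → Prop) (μ : G → GateTy) (ν : G → Bool) (side : G → Bool)

def SideEval (S : Set G) (b : Bool) : Set G :=
  SubEval W μ (CST W μ ν ∪ (S ∩ Frontier W μ side b)) (PartSide μ side b)

def DerivedInOwnPart (S : Set G) : Prop :=
  ∀ b, S ∩ PartSide μ side b ⊆ CST W μ ν ∪ SideEval W μ ν side S b

variable {W μ ν side}

theorem mem_roundStep {S : Set G} {u : G} :
    u ∈ RoundStep W μ ν side S ↔ (∃ b, u ∈ SideEval W μ ν side S b) ∨ u ∈ CST W μ ν := by
  simp only [RoundStep, SideEval, Set.mem_union, Bool.exists_bool]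
  tauto

theorem sideEval_subset_roundStep (S : Set G) (b : Bool) :
    SideEval W μ ν side S b ⊆ RoundStep W μ ν side S :=
  fun _ hu => mem_roundStep.2 (Or.inl ⟨b, hu⟩)

theorem cst_subset_roundStep (S : Set G) : CST W μ ν ⊆ RoundStep W μ ν side S :=
  Set.subset_union_right

theorem sideEval_mono {S S' : Set G} (h : S ⊆ S') (b : Bool) :
    SideEval W μ ν side S b ⊆ SideEval W μ ν side S' b :=
  subEval_mono (Set.union_subset_union_right _ (Set.inter_subset_inter_left _ h))
    subset_rfl

theorem roundStep_mono : Monotone (RoundStep W μ ν side) :=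
  fun _ _ h _ hu => by
    rcases mem_roundStep.1 hu with ⟨b, hb⟩ | hc
    · exact sideEval_subset_roundStep _ b (sideEval_mono h b hb)
    · exact cst_subset_roundStep _ hc

theorem monotone_iterate_roundStep :
    Monotone fun i => (RoundStep W μ ν side)^[i] (CST W μ ν) :=
  roundStep_mono.monotone_iterate_of_le_map (cst_subset_roundStep _)

theorem frontier_subset_partSide (b : Bool) :
    Frontier W μ side b ⊆ PartSide μ side (!b) :=
  fun _ hg => hg.1

theorem sideEval_subset (S : Set G) (b : Bool) :
    SideEval W μ ν side S b ⊆ CST W μ ν ∪ (S ∩ PartSide μ side (!b)) ∪ PartSide μ side b :=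
  subEval_subset_union.trans <| Set.union_subset_union_left _ <|
    Set.union_subset_union_right _ <|
      Set.inter_subset_inter_right _ (frontier_subset_partSide b)

theorem roundStep_subset (S : Set G) :
    RoundStep W μ ν side S ⊆ CST W μ ν ∪ {g | μ g ≠ GateTy.inp} := by
  intro u hu
  rcases mem_roundStep.1 hu with ⟨b, hb⟩ | hc
  · rcases sideEval_subset S b hb with (hc | ⟨-, hp⟩) | hp
    exacts [Or.inl hc, Or.inr hp.1, Or.inr hp.1]
  · exact Or.inl hc

/-- A gate of part `b` produced by the saturation of part `!b` was already a true frontier gate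
of `S`, so it is covered by the invariant for `S`, lifted along `S ⊆ RoundStep S`. -/
theorem DerivedInOwnPart.roundStep {S : Set G} (hmono : S ⊆ RoundStep W μ ν side S)
    (hS : DerivedInOwnPart W μ ν side S) : DerivedInOwnPart W μ ν side (RoundStep W μ ν side S) := by
  intro b u ⟨hu, hub⟩
  have hlift : SideEval W μ ν side S b ⊆ SideEval W μ ν side (RoundStep W μ ν side S) b :=
    sideEval_mono hmono b
  rcases mem_roundStep.1 hu with ⟨b', hb'⟩ | hc
  · by_cases hbb : b' = b
    · exact Or.inr (hlift (hbb ▸ hb'))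
    · rcases sideEval_subset S b' hb' with (hc | ⟨huS, -⟩) | hp
      · exact Or.inl hc
      · exact (hS b ⟨huS, hub⟩).imp_right (@hlift u)
      · exact absurd (hp.2.symm.trans hub.2) hbb
  · exact Or.inl hc

theorem derivedInOwnPart_iterate (i : ℕ) :
    DerivedInOwnPart W μ ν side ((RoundStep W μ ν side)^[i] (CST W μ ν)) := by
  induction i with
  | zero => exact fun _ _ hu => Or.inl hu.1
  | succ i ih =>
    have hstep : (RoundStep W μ ν side)^[i] (CST W μ ν) ⊆
        RoundStep W μ ν side ((RoundStep W μ ν side)^[i] (CST W μ ν)) := by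
      rw [← Function.iterate_succ_apply' (RoundStep W μ ν side)]
      exact monotone_iterate_roundStep i.le_succ
    rw [Function.iterate_succ_apply']
    exact ih.roundStep hstep

theorem mem_sideEval_of_wire {S : Set G} (hfix : RoundStep W μ ν side S = S)
    (hS : DerivedInOwnPart W μ ν side S) {u g : G} {b : Bool} (hu : u ∈ S) (hW : W u g)
    (hg : g ∈ PartSide μ side b) : u ∈ SideEval W μ ν side S b := by
  by_cases hinp : μ u = GateTy.inp
  · rcases roundStep_subset S (hfix.symm.subset hu) with hc | hint
    · exact subset_subEval (Or.inl hc)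
    · exact absurd hinp hint
  by_cases hside : side u = b
  · exact (hS b ⟨hu, hinp, hside⟩).elim (fun hc => subset_subEval (Or.inl hc)) id
  · exact subset_subEval (Or.inr ⟨hu, ⟨hinp, Bool.eq_not_iff.2 hside⟩, g, hg, hW⟩)

theorem gateClosed_of_roundStep_eq {S : Set G} (hfix : RoundStep W μ ν side S = S)
    (hS : DerivedInOwnPart W μ ν side S) : GateClosed W μ {g | μ g ≠ GateTy.inp} S := by
  have hside : ∀ b, SideEval W μ ν side S b ⊆ S :=
    fun b => (sideEval_subset_roundStep S b).trans hfix.subset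
  refine ⟨?_, ?_⟩
  · rintro g hg hor ⟨u, hW, hu⟩
    exact hside _ <| gateClosed_subEval.1 g ⟨hg, rfl⟩ hor
      ⟨u, hW, mem_sideEval_of_wire hfix hS hu hW ⟨hg, rfl⟩⟩
  · intro g hg hand hin
    exact hside _ <| gateClosed_subEval.2 g ⟨hg, rfl⟩ hand
      fun u hW => mem_sideEval_of_wire hfix hS (hin u hW) hW ⟨hg, rfl⟩

theorem eval_subset_of_roundStep_eq {S : Set G} (hfix : RoundStep W μ ν side S = S)
    (hS : DerivedInOwnPart W μ ν side S) : Eval W μ ν ⊆ S :=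
  subEval_subset ((cst_subset_roundStep S).trans hfix.subset) (gateClosed_of_roundStep_eq hfix hS)

theorem roundStep_subset_eval {S : Set G} (hS : S ⊆ Eval W μ ν) :
    RoundStep W μ ν side S ⊆ Eval W μ ν := by
  have hside : ∀ b, SideEval W μ ν side S b ⊆ Eval W μ ν := fun b =>
    subEval_subset (Set.union_subset subset_subEval (Set.inter_subset_left.trans hS))
      (gateClosed_subEval.anti fun _ hg => hg.1)
  intro u hu
  rcases mem_roundStep.1 hu with ⟨b, hb⟩ | hc
  exacts [hside b hb, subset_subEval hc]

theorem iterate_roundStep_subset_eval (i : ℕ) :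
    (RoundStep W μ ν side)^[i] (CST W μ ν) ⊆ Eval W μ ν := by
  induction i with
  | zero => exact subset_subEval
  | succ i ih =>
    rw [Function.iterate_succ_apply']
    exact roundStep_subset_eval ih

theorem roundStep_congr {S S' : Set G}
    (h : S ∩ (Frontier W μ side true ∪ Frontier W μ side false) =
      S' ∩ (Frontier W μ side true ∪ Frontier W μ side false)) :
    RoundStep W μ ν side S = RoundStep W μ ν side S' := by
  have hb : ∀ b, S ∩ Frontier W μ side b = S' ∩ Frontier W μ side b := fun b => by
    have hF : Frontier W μ side b ⊆ Frontier W μ side true ∪ Frontier W μ side false := by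
      cases b
      exacts [Set.subset_union_right, Set.subset_union_left]
    rw [← Set.inter_eq_right.2 hF, ← Set.inter_assoc, h, Set.inter_assoc]
  simp only [RoundStep, hb]

end Rounds

theorem partition_based_evaluation_general {G : Type*} [Fintype G]
    (W : G → G → Prop) (μ : G → GateTy)
    (ν : G → Bool) (side : G → Bool) :
    let F : Set G := Frontier W μ side true ∪ Frontier W μ side false
    let T : ℕ → Set G := fun i => (RoundStep W μ ν side)^[i] (CST W μ ν)
    (∀ i : ℕ, ∀ b : Bool, T i ∩ Frontier W μ side b ⊆ T (i + 1) ∩ Frontier W μ side b) ∧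
    T (F.ncard + 1) = T (F.ncard + 2) ∧
    T (F.ncard + 2) = Eval W μ ν := by
  intro F T
  have hT : Monotone T := monotone_iterate_roundStep
  obtain ⟨i, hi, hstab⟩ := exists_le_ncard_eq_succ_of_monotone (s := fun j => T j ∩ F)
    F.toFinite (fun _ _ h => Set.inter_subset_inter_left F (hT h)) fun _ => Set.inter_subset_right
  have hfix : RoundStep W μ ν side (T (i + 1)) = T (i + 1) := by
    calc RoundStep W μ ν side (T (i + 1)) = RoundStep W μ ν side (T i) :=
          roundStep_congr hstab.symm
      _ = T (i + 1) := (Function.iterate_succ_apply' _ _ _).symm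
  have hlate : ∀ j, i + 1 ≤ j → T j = T (i + 1) := fun j hj => by
    obtain ⟨k, rfl⟩ := Nat.exists_eq_add_of_le hj
    simp only [T, add_comm (i + 1) k, Function.iterate_add_apply]
    exact Function.iterate_fixed hfix k
  refine ⟨fun j _ => Set.inter_subset_inter_left _ (hT j.le_succ),
    by rw [hlate _ (by omega), hlate (F.ncard + 2) (by omega)], ?_⟩
  rw [hlate _ (by omega)]
  exact (iterate_roundStep_subset_eval _).antisymm
    (eval_subset_of_roundStep_eq hfix (derivedInOwnPart_iterate _))

theorem partition_based_evaluation {G : Type*} [Fintype G]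
    (W : G → G → Prop) (μ : G → GateTy)
    (hinp : ∀ g, μ g = GateTy.inp → ∀ u, ¬ W u g)
    (ν : G → Bool) (side : G → Bool) :
    let F : Set G := Frontier W μ side true ∪ Frontier W μ side false
    let T : ℕ → Set G := fun i => (RoundStep W μ ν side)^[i] (CST W μ ν)
    (∀ i : ℕ, ∀ b : Bool, T i ∩ Frontier W μ side b ⊆ T (i + 1) ∩ Frontier W μ side b) ∧
    T (F.ncard + 1) = T (F.ncard + 2) ∧
    T (F.ncard + 2) = Eval W μ ν :=
  partition_based_evaluation_general W μ ν side
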